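/- arXiv:2303.09287 — 12 statements merged into one kernel-verified Lean document; each statement's English description precedes it below -/
import Mathlib

section
/- If T is a transitive subset of a semitopology, f is a value assignment into a discrete space, and f is continuous at points p and p' of T, then f(p) = f(p'). -/
structure Semitopology (X : Type*) where
  Opens : Set (Set X)
  empty_mem : ∅ ∈ Opens
  univ_mem : Set.univ ∈ Opens
  sUnion_mem : ∀ 𝒮 ⊆ Opens, ⋃₀ 𝒮 ∈ Opens

namespace Semitopology

variable {X : Type*}

/-- T is transitive: opens meeting T on both sides must meet each other. -/
def IsTransitive (S : Semitopology X) (T : Set X) : Prop :=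
  ∀ O ∈ S.Opens, ∀ O' ∈ S.Opens, (O ∩ T).Nonempty → (T ∩ O').Nonempty → (O ∩ O').Nonempty

/-- T is topen: nonempty, open, and transitive. -/
def IsTopen (S : Semitopology X) (T : Set X) : Prop :=
  T.Nonempty ∧ T ∈ S.Opens ∧ S.IsTransitive T

/-- closure of a set. -/
def cl (S : Semitopology X) (P : Set X) : Set X :=
  {p | ∀ O ∈ S.Opens, p ∈ O → (O ∩ P).Nonempty}

/-- interior of a set. -/
def int (S : Semitopology X) (P : Set X) : Set X :=
  ⋃₀ {O ∈ S.Opens | O ⊆ P}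

/-- two points are intertwined. -/
def Intertwined (S : Semitopology X) (p p' : X) : Prop :=
  ∀ O ∈ S.Opens, p ∈ O → ∀ O' ∈ S.Opens, p' ∈ O' → (O ∩ O').Nonempty

/-- the set of points intertwined with p. -/
def intertwinedSet (S : Semitopology X) (p : X) : Set X :=
  {p' | S.Intertwined p p'}

/-- the community of p. -/
def community (S : Semitopology X) (p : X) : Set X :=
  S.int (S.intertwinedSet p)

end Semitopology

open Semitopology
theorem transitive_correlated {X Val : Type*} (S : Semitopology X) (T : Set X)
    (hT : S.IsTransitive T) (f : X → Val) (p p' : X) (hp : p ∈ T) (hp' : p' ∈ T)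
    (hcp : ∃ O ∈ S.Opens, p ∈ O ∧ O ⊆ f ⁻¹' {f p})
    (hcp' : ∃ O ∈ S.Opens, p' ∈ O ∧ O ⊆ f ⁻¹' {f p'}) :
    f p = f p' := by
  obtain ⟨O, hO, hpO, hOf⟩ := hcp
  obtain ⟨O', hO', hpO', hOf'⟩ := hcp'
  obtain ⟨q, hqO, hqO'⟩ := hT O hO O' hO' ⟨p, hpO, hp⟩ ⟨p', hp', hpO'⟩
  have h1 := hOf hqO
  have h2 := hOf' hqO'
  simp only [Set.mem_preimage, Set.mem_singleton_iff] at h1 h2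
  rw [← h1, ← h2]
end

section
/- If T ⊆ P cannot be split by any value assignment into a two-element discrete space — i.e. for all p, p' ∈ T and all f : P → Val with f continuous at p and at p', f(p) = f(p') — then T is transitive. -/
open Semitopology
theorem unsplittable_implies_transitive {X Val : Type*} (S : Semitopology X)
    (T : Set X) (hVal : ∃ v w : Val, v ≠ w)
    (h : ∀ p ∈ T, ∀ p' ∈ T, ∀ f : X → Val,
      (∃ O ∈ S.Opens, p ∈ O ∧ O ⊆ f ⁻¹' {f p}) →
      (∃ O ∈ S.Opens, p' ∈ O ∧ O ⊆ f ⁻¹' {f p'}) →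
      f p = f p') :
    S.IsTransitive T := by
  classical
  obtain ⟨v, w, hvw⟩ := hVal
  intro O hO O' hO' ⟨p, hpO, hpT⟩ ⟨p', hpT', hpO'⟩
  by_contra hne
  rw [Set.not_nonempty_iff_eq_empty] at hne
  set f : X → Val := fun x => if x ∈ O then v else w with hf
  have hfp : f p = v := if_pos hpO
  have hp'O : p' ∉ O := fun hx => Set.eq_empty_iff_forall_notMem.mp hne p' ⟨hx, hpO'⟩
  have hfp' : f p' = w := if_neg hp'O
  have := h p hpT p' hpT' f
    ⟨O, hO, hpO, fun x hx => by simp [hf, hx, hpO]⟩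
    ⟨O', hO', hpO', fun x hx => by
      have hxO : x ∉ O := fun hxO => Set.eq_empty_iff_forall_notMem.mp hne x ⟨hxO, hx⟩
      simp [hf, hxO, hp'O]⟩
  rw [hfp, hfp'] at this
  exact hvw this
end

section
/- If T and T' are transitive subsets of a semitopology, at least one of them is open, and T ∩ T' ≠ ∅, then T ∪ T' is transitive. -/
open Semitopology
theorem transitive_union {X : Type*} (S : Semitopology X) (T T' : Set X)
    (hT : S.IsTransitive T) (hT' : S.IsTransitive T')
    (hopen : T ∈ S.Opens ∨ T' ∈ S.Opens)
    (hmeet : (T ∩ T').Nonempty) :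
    S.IsTransitive (T ∪ T') := by
  intro O hO O' hO' h1 h2
  have h1' : (O ∩ T).Nonempty ∨ (O ∩ T').Nonempty := by
    rcases h1 with ⟨x, hx, hxT | hxT'⟩
    · exact Or.inl ⟨x, hx, hxT⟩
    · exact Or.inr ⟨x, hx, hxT'⟩
  have h2' : (T ∩ O').Nonempty ∨ (T' ∩ O').Nonempty := by
    rcases h2 with ⟨x, hxT | hxT', hx⟩
    · exact Or.inl ⟨x, hxT, hx⟩
    · exact Or.inr ⟨x, hxT', hx⟩
  have hTT' : (T ∩ T').Nonempty := hmeet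
  have hT'T : (T' ∩ T).Nonempty := ⟨hmeet.choose, hmeet.choose_spec.2, hmeet.choose_spec.1⟩
  rcases h1' with hOT | hOT' <;> rcases h2' with hTO' | hT'O'
  · exact hT O hO O' hO' hOT hTO'
  · rcases hopen with hTop | hT'op
    · exact hT O hO O' hO' hOT (hT' T hTop O' hO' hTT' hT'O')
    · exact hT' O hO O' hO' (hT O hO T' hT'op hOT hTT') hT'O'
  · rcases hopen with hTop | hT'op
    · exact hT O hO O' hO' (hT' O hO T hTop hOT' hT'T) hTO'
    · exact hT' O hO O' hO' hOT' (hT T' hT'op O' hO' hT'T hTO')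
  · exact hT' O hO O' hO' hOT' hT'O'
end

section
/- The union of a chain (totally ordered by inclusion) of transitive subsets of a semitopology is transitive. -/
open Semitopology
theorem transitive_chain_union {X : Type*} (S : Semitopology X)
    (𝒯 : Set (Set X)) (hchain : IsChain (· ⊆ ·) 𝒯)
    (htrans : ∀ T ∈ 𝒯, S.IsTransitive T) :
    S.IsTransitive (⋃₀ 𝒯) := by
  rintro O hO O' hO' ⟨x, hxO, T1, hT1, hxT1⟩ ⟨y, ⟨T2, hT2, hyT2⟩, hyO'⟩
  rcases eq_or_ne T1 T2 with rfl | hne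
  · exact htrans T1 hT1 O hO O' hO' ⟨x, hxO, hxT1⟩ ⟨y, hyT2, hyO'⟩
  · rcases hchain hT1 hT2 hne with h | h
    · exact htrans T2 hT2 O hO O' hO' ⟨x, hxO, h hxT1⟩ ⟨y, hyT2, hyO'⟩
    · exact htrans T1 hT1 O hO O' hO' ⟨x, hxO, hxT1⟩ ⟨y, h hyT2, hyO'⟩
end

section
/- If 𝒯 is a family of topen sets that pairwise intersect, then ⋃𝒯 is topen. -/
open Semitopology
theorem topen_clique_union {X : Type*} (S : Semitopology X)
    (𝒯 : Set (Set X)) (h𝒯 : 𝒯.Nonempty)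
    (htopen : ∀ T ∈ 𝒯, S.IsTopen T)
    (hclique : ∀ T ∈ 𝒯, ∀ T' ∈ 𝒯, (T ∩ T').Nonempty) :
    S.IsTopen (⋃₀ 𝒯) := by

  obtain ⟨T0, hT0⟩ := h𝒯
  refine ⟨⟨(htopen T0 hT0).1.choose, T0, hT0, (htopen T0 hT0).1.choose_spec⟩, ?_, ?_⟩
  · exact S.sUnion_mem 𝒯 (fun T hT => (htopen T hT).2.1)
  · intro O hO O' hO' h1 h2
    obtain ⟨x, hxO, T, hT, hxT⟩ := h1
    obtain ⟨y, ⟨T', hT', hyT'⟩, hyO'⟩ := h2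
    have hOT' : (O ∩ T').Nonempty := by
      have := (htopen T hT).2.2 O hO T' (htopen T' hT').2.1 ⟨x, hxO, hxT⟩
        (hclique T hT T' hT')
      exact this
    exact (htopen T' hT').2.2 O hO O' hO' hOT' ⟨y, hyT', hyO'⟩
end

section
/- Every topen set in a semitopology is contained in a unique maximal topen set. -/
open Semitopology
theorem topen_unique_maximal {X : Type*} (S : Semitopology X) (T : Set X)
    (hT : S.IsTopen T) :
    ∃! M : Set X, S.IsTopen M ∧ T ⊆ M ∧
      ∀ M' : Set X, S.IsTopen M' → M ⊆ M' → M' = M := by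
  obtain ⟨hTne, hTopen, hTtrans⟩ := hT
  set 𝒮 : Set (Set X) := {O | S.IsTopen O ∧ (O ∩ T).Nonempty} with h𝒮
  set M : Set X := ⋃₀ 𝒮 with hM
  have hT𝒮 : T ∈ 𝒮 := ⟨⟨hTne, hTopen, hTtrans⟩, by
    simpa [Set.inter_self] using hTne⟩
  have hTM : T ⊆ M := Set.subset_sUnion_of_mem hT𝒮
  have hMopen : M ∈ S.Opens := S.sUnion_mem 𝒮 (fun O hO => hO.1.2.1)
  -- any open meeting M meets T
  have key : ∀ O ∈ S.Opens, (O ∩ M).Nonempty → (O ∩ T).Nonempty := by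
    rintro O hO ⟨x, hxO, hxM⟩
    obtain ⟨A, hA𝒮, hxA⟩ := hxM
    exact hA𝒮.1.2.2 O hO T hTopen ⟨x, hxO, hxA⟩
      (by obtain ⟨y, hy⟩ := hA𝒮.2; exact ⟨y, hy.1, hy.2⟩)
  have hMtrans : S.IsTransitive M := by
    intro O hO O' hO' h1 h2
    have h1T : (O ∩ T).Nonempty := key O hO h1
    have h2T : (O' ∩ T).Nonempty := key O' hO' (by
      obtain ⟨y, hy⟩ := h2; exact ⟨y, hy.2, hy.1⟩)
    exact hTtrans O hO O' hO' h1T (by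
      obtain ⟨y, hy⟩ := h2T; exact ⟨y, hy.2, hy.1⟩)
  have hMtopen : S.IsTopen M := ⟨hTne.mono hTM, hMopen, hMtrans⟩
  have hmax : ∀ M' : Set X, S.IsTopen M' → M ⊆ M' → M' = M := by
    intro M' hM' hMM'
    have hM'𝒮 : M' ∈ 𝒮 := ⟨hM', by
      obtain ⟨y, hy⟩ := hTne; exact ⟨y, hMM' (hTM hy), hy⟩⟩
    exact le_antisymm (Set.subset_sUnion_of_mem hM'𝒮) hMM'
  refine ⟨M, ⟨hMtopen, hTM, hmax⟩, ?_⟩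
  rintro M₂ ⟨hM₂topen, hTM₂, hmax₂⟩
  have hM₂M : M₂ ⊆ M := Set.subset_sUnion_of_mem
    ⟨hM₂topen, by obtain ⟨y, hy⟩ := hTne; exact ⟨y, hTM₂ hy, hy⟩⟩
  exact (hmax₂ M hMtopen hM₂M).symm
end

section
/- A subset T of a semitopology is transitive if and only if every pair of points p, p' ∈ T is intertwined (i.e. every open neighbourhood of p intersects every open neighbourhood of p'). -/
open Semitopology
theorem transitive_iff_pairwise_intertwined {X : Type*} (S : Semitopology X)
    (T : Set X) :
    S.IsTransitive T ↔ ∀ p ∈ T, ∀ p' ∈ T, S.Intertwined p p' := by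
  constructor
  · intro h p hp p' hp' O hO hpO O' hO' hpO'
    exact h O hO O' hO' ⟨p, hpO, hp⟩ ⟨p', hp', hpO'⟩
  · rintro h O hO O' hO' ⟨p, hpO, hpT⟩ ⟨p', hp'T, hp'O'⟩
    exact h p hpT p' hp'T O hO hpO O' hO' hp'O'
end

section
/- In a topology (open sets closed under finite intersections), an open set O is transitive if and only if it is hyperconnected, i.e. all nonempty open subsets of O pairwise intersect. -/
open Semitopology
theorem transitive_iff_hyperconnected_in_topology {X : Type*} (S : Semitopology X)
    (hinter : ∀ A ∈ S.Opens, ∀ B ∈ S.Opens, A ∩ B ∈ S.Opens)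
    (O : Set X) (hO : O ∈ S.Opens) :
    S.IsTransitive O ↔
      ∀ U ∈ S.Opens, ∀ V ∈ S.Opens, U ⊆ O → V ⊆ O →
        U.Nonempty → V.Nonempty → (U ∩ V).Nonempty := by
  constructor
  · intro ht U hU V hV hUO hVO ⟨u, hu⟩ ⟨v, hv⟩
    exact ht U hU V hV ⟨u, hu, hUO hu⟩ ⟨v, hVO hv, hv⟩
  · intro h A hA B hB ⟨a, haA, haO⟩ ⟨b, hbO, hbB⟩
    obtain ⟨x, ⟨hxA, hxO⟩, hxO', hxB⟩ :=
      h (A ∩ O) (hinter A hA O hO) (O ∩ B) (hinter O hO B hB)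
        Set.inter_subset_right Set.inter_subset_left ⟨a, haA, haO⟩ ⟨b, hbO, hbB⟩
    exact ⟨x, hxA, hxB⟩
end

section
/- In a semitopology, a transitive subset (even a topen one) need not be strongly transitive: there exists a semitopology on {0,1,2} in which {0,2} is transitive but not strongly transitive. -/
open Semitopology
def StronglyTransitive {X : Type*} (S : Semitopology X) (T : Set X) : Prop :=
  ∀ O ∈ S.Opens, ∀ O' ∈ S.Opens, (O ∩ T).Nonempty → (T ∩ O').Nonempty →
    (O ∩ T ∩ O').Nonempty


lemma opens_char : {O : Set (Fin 3) | O = ∅ ∨ (1 : Fin 3) ∈ O} =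
    ({∅, {1}, {0, 1}, {1, 2}, Set.univ} : Set (Set (Fin 3))) := by
  ext O
  simp only [Set.mem_setOf_eq, Set.mem_insert_iff, Set.mem_singleton_iff]
  constructor
  · rintro (rfl | h1)
    · tauto
    · by_cases h0 : (0 : Fin 3) ∈ O <;> by_cases h2 : (2 : Fin 3) ∈ O
      · right; right; right; right
        ext x; fin_cases x <;> simp_all
      · right; right; left
        ext x; fin_cases x <;> simp_all
      · right; right; right; left
        ext x; fin_cases x <;> simp_all
      · right; left
        ext x; fin_cases x <;> simp_all
  · rintro (rfl | rfl | rfl | rfl | rfl) <;> simp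

theorem transitive_not_strongly_transitive :
    ∃ S : Semitopology (Fin 3),
      S.Opens = {∅, {1}, {0, 1}, {1, 2}, Set.univ} ∧
      S.IsTransitive {0, 2} ∧ ¬ StronglyTransitive S {0, 2} := by
  refine ⟨⟨{O | O = ∅ ∨ (1 : Fin 3) ∈ O}, ?_, ?_, ?_⟩, opens_char, ?_, ?_⟩
  · left; rfl
  · right; trivial
  · intro 𝒮 h𝒮
    by_cases h : ∃ O ∈ 𝒮, (1 : Fin 3) ∈ O
    · obtain ⟨O, hO, h1⟩ := h
      right; exact ⟨O, hO, h1⟩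
    · left
      ext x
      simp only [Set.mem_sUnion, Set.mem_empty_iff_false, iff_false]
      rintro ⟨O, hO, hx⟩
      rcases h𝒮 hO with rfl | h1
      · exact hx
      · exact h ⟨O, hO, h1⟩
  · intro O hO O' hO' ⟨a, ha, haT⟩ ⟨b, hbT, hb⟩
    rcases hO with rfl | h1
    · exact absurd ha (by simp)
    rcases hO' with rfl | h1'
    · exact absurd hb (by simp)
    exact ⟨1, h1, h1'⟩
  · intro h
    have := h {0, 1} (Or.inr (by simp)) {1, 2} (Or.inr (by simp))
      ⟨0, by simp⟩ ⟨2, by simp⟩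
    obtain ⟨x, ⟨hx1, hx2⟩, hx3⟩ := this
    fin_cases x <;> simp_all
end

section
/- In a semitopology, if T is a topen set and O is an open set, then T ∩ O ≠ ∅ if and only if T ⊆ cl(T) ⊆ cl(O). -/
open Semitopology
theorem topen_meets_open_iff_closure_subset {X : Type*} (S : Semitopology X)
    (T O : Set X) (hT : S.IsTopen T) (hO : O ∈ S.Opens) :
    (T ∩ O).Nonempty ↔ (T ⊆ S.cl T ∧ S.cl T ⊆ S.cl O) := by
  obtain ⟨hne, hTo, htrans⟩ := hT
  constructor
  · intro hTO
    refine ⟨fun p hp U hU hpU => ⟨p, hpU, hp⟩, fun p hp U hU hpU => ?_⟩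
    exact htrans U hU O hO (hp U hU hpU) hTO
  · rintro ⟨h1, h2⟩
    obtain ⟨p, hp⟩ := hne
    obtain ⟨q, hqT, hqO⟩ := h2 (h1 hp) T hTo hp
    exact ⟨q, hqT, hqO⟩
end

section
/- In a semitopology, the set of points intertwined with p equals the intersection of the closures of all open neighbourhoods of p, and equals the intersection of all closed neighbourhoods of p; in particular it is a closed set. -/
open Semitopology

namespace Semitopology

lemma subset_cl' (S : Semitopology X) (P : Set X) : P ⊆ S.cl P :=
  fun x hx O _ hxO => ⟨x, hxO, hx⟩

lemma cl_closed' (S : Semitopology X) (P : Set X) : S.cl (S.cl P) = S.cl P := by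
  apply Set.Subset.antisymm
  · intro x hx O hO hxO
    obtain ⟨y, hyO, hy⟩ := hx O hO hxO
    exact hy O hO hyO
  · exact S.subset_cl' _

lemma int_open' (S : Semitopology X) (P : Set X) : S.int P ∈ S.Opens :=
  S.sUnion_mem _ (fun O hO => hO.1)

lemma int_subset' (S : Semitopology X) (P : Set X) : S.int P ⊆ P := by
  rintro x ⟨O, ⟨hO, hOP⟩, hx⟩
  exact hOP hx

end Semitopology

theorem intertwinedSet_characterisations {X : Type*} (S : Semitopology X) (p : X) :
    S.intertwinedSet p = ⋂₀ {C : Set X | ∃ O ∈ S.Opens, p ∈ O ∧ C = S.cl O} ∧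
    S.intertwinedSet p = ⋂₀ {C : Set X | S.cl C = C ∧ p ∈ S.int C} ∧
    S.cl (S.intertwinedSet p) = S.intertwinedSet p := by
  have h1 : S.intertwinedSet p = ⋂₀ {C : Set X | ∃ O ∈ S.Opens, p ∈ O ∧ C = S.cl O} := by
    ext q
    simp only [Set.mem_sInter, Set.mem_setOf_eq, intertwinedSet, Intertwined]
    constructor
    · rintro h C ⟨O, hO, hpO, rfl⟩ O' hO' hqO'
      obtain ⟨x, hx1, hx2⟩ := h O hO hpO O' hO' hqO'
      exact ⟨x, hx2, hx1⟩
    · intro h O hO hpO O' hO' hqO'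
      obtain ⟨x, hx1, hx2⟩ := h (S.cl O) ⟨O, hO, hpO, rfl⟩ O' hO' hqO'
      exact ⟨x, hx2, hx1⟩
  have h3 : S.cl (S.intertwinedSet p) = S.intertwinedSet p := by
    apply Set.Subset.antisymm
    · intro x hx
      rw [h1]
      rintro C ⟨O, hO, hpO, rfl⟩
      intro U hU hxU
      obtain ⟨y, hyU, hy⟩ := hx U hU hxU
      have : y ∈ S.cl O := by rw [h1] at hy; exact hy _ ⟨O, hO, hpO, rfl⟩
      exact this U hU hyU
    · exact S.subset_cl' _
  refine ⟨h1, ?_, h3⟩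
  apply Set.Subset.antisymm
  · intro q hq C ⟨hC, hpC⟩
    by_contra hqC
    have hqcl : q ∉ S.cl C := by rw [hC]; exact hqC
    simp only [cl, Set.mem_setOf_eq, not_forall] at hqcl
    obtain ⟨O', hO', hqO', hdisj⟩ := hqcl
    have := hq (S.int C) (S.int_open' C) hpC O' hO' hqO'
    obtain ⟨x, hx1, hx2⟩ := this
    exact hdisj ⟨x, hx2, S.int_subset' C hx1⟩
  · intro q hq
    rw [h1]
    rintro C ⟨O, hO, hpO, rfl⟩
    apply hq
    refine ⟨S.cl_closed' O, ?_⟩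
    exact ⟨O, ⟨hO, S.subset_cl' O⟩, hpO⟩
end

section
/- A point p in a semitopology is regular if and only if it is weakly regular and unconflicted. -/
open Semitopology
theorem regular_iff_weaklyRegular_and_unconflicted {X : Type*} (S : Semitopology X)
    (p : X) :
    (p ∈ S.community p ∧ S.IsTopen (S.community p)) ↔
      (p ∈ S.community p ∧
        ∀ p' p'' : X, S.Intertwined p' p → S.Intertwined p p'' →
          S.Intertwined p' p'') := by
  have comm_open : S.community p ∈ S.Opens := by
    apply S.sUnion_mem
    intro O hO; exact hO.1
  have comm_sub : S.community p ⊆ S.intertwinedSet p := by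
    rintro q ⟨O, hO, hq⟩; exact hO.2 hq
  have symm : ∀ a b, S.Intertwined a b → S.Intertwined b a := by
    intro a b h O hO hbO O' hO' haO'
    obtain ⟨x, hx1, hx2⟩ := h O' hO' haO' O hO hbO
    exact ⟨x, hx2, hx1⟩
  constructor
  · rintro ⟨hp, ⟨_, _, htrans⟩⟩
    refine ⟨hp, fun p' p'' h1 h2 O hO hp'O O' hO' hp''O' => ?_⟩
    have hOK : (O ∩ S.community p).Nonempty := by
      obtain ⟨x, hx1, hx2⟩ := h1 O hO hp'O _ comm_open hp
      exact ⟨x, hx1, hx2⟩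
    have hKO' : (S.community p ∩ O').Nonempty := by
      obtain ⟨x, hx1, hx2⟩ := h2 _ comm_open hp O' hO' hp''O'
      exact ⟨x, hx1, hx2⟩
    exact htrans O hO O' hO' hOK hKO'
  · rintro ⟨hp, huncon⟩
    refine ⟨hp, ⟨p, hp⟩, comm_open, ?_⟩
    intro O hO O' hO' ⟨q, hqO, hqK⟩ ⟨q', hq'K, hq'O'⟩
    have h1 : S.Intertwined p q := comm_sub hqK
    have h2 : S.Intertwined p q' := comm_sub hq'K
    exact huncon q q' (symm p q h1) h2 O hO hqO O' hO' hq'O'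
end
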